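/- arXiv:math/0502481 — 2 statements merged into one kernel-verified Lean document; each statement's English description precedes it below -/
import Mathlib

section
/- Let A(t) be a fanning frame satisfying Ä(t) + Ȧ(t)P(t) + A(t)Q(t) = O, and define the Schwarzian {A(t),t} = 2Q(t) − (1/2)P(t)² − Ṗ(t) and the Jacobi endomorphism K(t) = F̈(t)²/4 where F(t) is the fundamental endomorphism. Then K(t)A(t) = (1/2)A(t){A(t),t}. -/
open Matrix

noncomputable section

/-- `MDeriv A A'` says that `A'` is the entrywise derivative of the matrix curve `A`. -/
def MDeriv {m k : Type*} (A A' : ℝ → Matrix m k ℝ) : Prop :=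
  ∀ (i : m) (j : k) (t : ℝ), HasDerivAt (fun s => A s i j) (A' t i j) t

lemma mderiv_mul {m k l : Type*} [Fintype k] {A A' : ℝ → Matrix m k ℝ}
    {B B' : ℝ → Matrix k l ℝ} (hA : MDeriv A A') (hB : MDeriv B B') :
    MDeriv (fun t => A t * B t) (fun t => A' t * B t + A t * B' t) := by
  intro i j t
  have h : HasDerivAt (fun s => ∑ x, A s i x * B s x j)
      (∑ x, (A' t i x * B t x j + A t i x * B' t x j)) t :=
    HasDerivAt.fun_sum fun x _ => (hA i x t).mul (hB x j t)
  simpa [Matrix.mul_apply, Matrix.add_apply, Finset.sum_add_distrib] using h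

lemma mderiv_add {m k : Type*} {A A' B B' : ℝ → Matrix m k ℝ}
    (hA : MDeriv A A') (hB : MDeriv B B') :
    MDeriv (fun t => A t + B t) (fun t => A' t + B' t) := by
  intro i j t
  simpa [Matrix.add_apply] using (hA i j t).fun_add (hB i j t)

lemma mderiv_neg {m k : Type*} {A A' : ℝ → Matrix m k ℝ} (hA : MDeriv A A') :
    MDeriv (fun t => -A t) (fun t => -A' t) := by
  intro i j t
  simpa [Matrix.neg_apply] using (hA i j t).fun_neg

lemma mderiv_unique {m k : Type*} {A A' B' : ℝ → Matrix m k ℝ}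
    (h1 : MDeriv A A') (h2 : MDeriv A B') : ∀ t, A' t = B' t := by
  intro t; ext i j; exact (h1 i j t).unique (h2 i j t)

lemma mderiv_congr {m k : Type*} {A B A' : ℝ → Matrix m k ℝ}
    (h : ∀ t, A t = B t) (hA : MDeriv A A') : MDeriv B A' := by
  intro i j t
  have : (fun s => A s i j) = fun s => B s i j := by funext s; rw [h s]
  exact this ▸ hA i j t

lemma mderiv_zero {m k : Type*} :
    MDeriv (fun _ : ℝ => (0 : Matrix m k ℝ)) (fun _ => 0) := by
  intro i j t
  simpa using hasDerivAt_const t (0 : ℝ)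

/-- the Jacobi endomorphism `K = F̈²/4` and the Schwarzian
`{A,t} = 2Q - (1/2)P² - Ṗ` of a fanning frame satisfy `K A = (1/2) A {A,t}`. -/
theorem stmt8 {n : ℕ} (A A' A'' : ℝ → Matrix (Fin n ⊕ Fin n) (Fin n) ℝ)
    (P P' Q : ℝ → Matrix (Fin n) (Fin n) ℝ)
    (F F' F'' : ℝ → Matrix (Fin n ⊕ Fin n) (Fin n ⊕ Fin n) ℝ)
    (hA : MDeriv A A') (hA' : MDeriv A' A'')
    (hAf : ∀ t, IsUnit (fromCols (A t) (A' t)))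
    (hPQ : ∀ t, A'' t + A' t * P t + A t * Q t = 0)
    (hP' : MDeriv P P')
    (hF : ∀ t, F t * A t = 0 ∧ F t * A' t = A t)
    (hF' : MDeriv F F') (hF'' : MDeriv F' F'') :
    ∀ t, ((4⁻¹ : ℝ) • (F'' t * F'' t)) * A t
        = (2⁻¹ : ℝ) • (A t * ((2 : ℝ) • Q t - (2⁻¹ : ℝ) • (P t * P t) - P' t)) := by
  -- A'' in terms of A, A'
  have hA'' : ∀ t, A'' t = -(A' t * P t) - A t * Q t := by
    intro t
    have h := hPQ t
    have : A'' t = -(A' t * P t + A t * Q t) :=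
      eq_neg_of_add_eq_zero_left (by rw [← add_assoc]; exact h)
    rw [this, neg_add, ← sub_eq_add_neg]
  -- F' A = -A
  have h1 : ∀ t, F' t * A t + F t * A' t = 0 :=
    mderiv_unique (mderiv_mul hF' hA)
      (mderiv_congr (fun t => ((hF t).1).symm) mderiv_zero)
  have hF'A : ∀ t, F' t * A t = -A t := by
    intro t
    have h := h1 t
    rw [(hF t).2] at h
    exact eq_neg_of_add_eq_zero_left h
  -- F A'' = -(A P)
  have hFA'' : ∀ t, F t * A'' t = -(A t * P t) := by
    intro t
    rw [hA'' t, Matrix.mul_sub, Matrix.mul_neg, ← Matrix.mul_assoc,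
      ← Matrix.mul_assoc, (hF t).1, (hF t).2, Matrix.zero_mul, sub_zero]
  -- differentiate F A' = A : F' A' + F A'' = A'
  have h2 : ∀ t, F' t * A' t + F t * A'' t = A' t :=
    mderiv_unique (mderiv_mul hF' hA') (mderiv_congr (fun t => ((hF t).2).symm) hA)
  have hF'A' : ∀ t, F' t * A' t = A' t + A t * P t := by
    intro t
    have h := h2 t
    rw [hFA'' t] at h
    have : F' t * A' t = A' t - -(A t * P t) := eq_sub_of_add_eq h
    rw [this, sub_neg_eq_add]
  -- F' A'' = -(A' P) - A P P + A Q
  have hF'A'' : ∀ t, F' t * A'' t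
      = -(A' t * P t) - A t * P t * P t + A t * Q t := by
    intro t
    rw [hA'' t, Matrix.mul_sub, Matrix.mul_neg, ← Matrix.mul_assoc,
      ← Matrix.mul_assoc, hF'A t, hF'A' t, Matrix.add_mul, Matrix.neg_mul]
    abel
  -- differentiate F' A = -A : F'' A + F' A' = -A'
  have h3 : ∀ t, F'' t * A t + F' t * A' t = -A' t :=
    mderiv_unique (mderiv_mul hF'' hA)
      (mderiv_congr (fun t => (hF'A t).symm) (mderiv_neg hA))
  have hE1 : ∀ t, F'' t * A t = -A' t - (A' t + A t * P t) := by
    intro t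
    have h := h3 t
    rw [hF'A' t] at h
    exact eq_sub_of_add_eq h
  -- differentiate F' A' = A' + A P : F'' A' + F' A'' = A'' + (A' P + A P')
  have h4 : ∀ t, F'' t * A' t + F' t * A'' t = A'' t + (A' t * P t + A t * P' t) :=
    mderiv_unique (mderiv_mul hF'' hA')
      (mderiv_congr (fun t => (hF'A' t).symm) (mderiv_add hA' (mderiv_mul hA hP')))
  have hE2 : ∀ t, F'' t * A' t
      = A' t * P t + A t * P' t + A t * P t * P t - A t * Q t - A t * Q t := by
    intro t
    have h := h4 t
    rw [hF'A'' t, hA'' t] at h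
    have h5 : F'' t * A' t
        = -(A' t * P t) - A t * Q t + (A' t * P t + A t * P' t)
          - (-(A' t * P t) - A t * P t * P t + A t * Q t) := eq_sub_of_add_eq h
    rw [h5]; abel
  intro t
  have key : F'' t * (F'' t * A t)
      = -(A t * P' t) - (A t * P' t) - (A t * (P t * P t)) + (A t * Q t + A t * Q t)
        + (A t * Q t + A t * Q t) := by
    rw [hE1 t, Matrix.mul_sub, Matrix.mul_neg, Matrix.mul_add,
      ← Matrix.mul_assoc, hE2 t, hE1 t]
    simp only [Matrix.add_mul, Matrix.sub_mul, Matrix.neg_mul,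
      Matrix.mul_assoc]
    abel
  rw [Matrix.smul_mul, Matrix.mul_assoc, key, Matrix.mul_sub, Matrix.mul_sub,
    Matrix.mul_smul, Matrix.mul_smul, two_smul]
  match_scalars <;> ring
end
end

section
/- If A(t) is a fanning frame and X(t) is a smooth curve of invertible n×n matrices, then the Schwarzian of A(t)X(t) equals X(t)^{-1}{A(t),t}X(t). -/
open Matrix

noncomputable section

lemma MDeriv.mul' {m k l : Type*} [Fintype k] {U U' : ℝ → Matrix m k ℝ}
    {V V' : ℝ → Matrix k l ℝ} (hU : MDeriv U U') (hV : MDeriv V V') :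
    MDeriv (fun t => U t * V t) (fun t => U' t * V t + U t * V' t) := by
  intro i j t
  have h : HasDerivAt (fun s => ∑ c, U s i c * V s c j)
      (∑ c, (U' t i c * V t c j + U t i c * V' t c j)) t :=
    HasDerivAt.fun_sum fun c _ => (hU i c t).mul (hV c j t)
  simpa [Matrix.mul_apply, Matrix.add_apply, Finset.sum_add_distrib] using h

lemma MDeriv.sub' {m k : Type*} {U U' V V' : ℝ → Matrix m k ℝ}
    (hU : MDeriv U U') (hV : MDeriv V V') :
    MDeriv (fun t => U t - V t) (fun t => U' t - V' t) := by
  intro i j t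
  simpa [Matrix.sub_apply] using (hU i j t).fun_sub (hV i j t)

lemma MDeriv.smul' {m k : Type*} {U U' : ℝ → Matrix m k ℝ} (c : ℝ)
    (hU : MDeriv U U') :
    MDeriv (fun t => c • U t) (fun t => c • U' t) := by
  intro i j t
  simpa [Matrix.smul_apply, smul_eq_mul] using (hU i j t).const_mul c

/-- the Schwarzian of `A(t)X(t)` equals `X(t)⁻¹ {A(t),t} X(t)` for a
smooth curve `X(t)` of invertible matrices. -/
theorem stmt10 {n : ℕ} (A A' A'' : ℝ → Matrix (Fin n ⊕ Fin n) (Fin n) ℝ)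
    (X X' X'' : ℝ → Matrix (Fin n) (Fin n) ℝ)
    (P P' Q P₁ P₁' Q₁ : ℝ → Matrix (Fin n) (Fin n) ℝ)
    (hA : MDeriv A A') (hA' : MDeriv A' A'')
    (hAf : ∀ t, IsUnit (fromCols (A t) (A' t)))
    (hX : MDeriv X X') (hX' : MDeriv X' X'') (hXu : ∀ t, IsUnit (X t))
    (hPQ : ∀ t, A'' t + A' t * P t + A t * Q t = 0)
    (hP' : MDeriv P P')
    (hPQ₁ : ∀ t, (A'' t * X t + (2 : ℝ) • (A' t * X' t) + A t * X'' t)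
        + (A' t * X t + A t * X' t) * P₁ t + (A t * X t) * Q₁ t = 0)
    (hP₁' : MDeriv P₁ P₁') :
    ∀ t, (2 : ℝ) • Q₁ t - (2⁻¹ : ℝ) • (P₁ t * P₁ t) - P₁' t
        = (X t)⁻¹ * ((2 : ℝ) • Q t - (2⁻¹ : ℝ) • (P t * P t) - P' t) * X t := by
  have key : ∀ s, A s * (X'' s - Q s * X s + X' s * P₁ s + X s * Q₁ s)
      + A' s * ((2 : ℝ) • X' s - P s * X s + X s * P₁ s) = 0 := by
    intro s
    have h : A s * (X'' s - Q s * X s + X' s * P₁ s + X s * Q₁ s)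
        + A' s * ((2 : ℝ) • X' s - P s * X s + X s * P₁ s) =
        ((A'' s * X s + (2 : ℝ) • (A' s * X' s) + A s * X'' s)
          + (A' s * X s + A s * X' s) * P₁ s + (A s * X s) * Q₁ s)
        - (A'' s + A' s * P s + A s * Q s) * X s := by
      simp only [Matrix.mul_sub, Matrix.mul_add, Matrix.add_mul, Matrix.sub_mul,
        Matrix.mul_smul, Matrix.smul_mul, Matrix.mul_assoc]
      abel
    rw [h, hPQ₁ s, hPQ s, Matrix.zero_mul, sub_zero]
  have hMN : ∀ s, ((2 : ℝ) • X' s - P s * X s + X s * P₁ s = 0)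
      ∧ (X'' s - Q s * X s + X' s * P₁ s + X s * Q₁ s = 0) := by
    intro s
    have h0 : fromCols (A s) (A' s)
        * fromRows (X'' s - Q s * X s + X' s * P₁ s + X s * Q₁ s)
          ((2 : ℝ) • X' s - P s * X s + X s * P₁ s)
        = fromCols (A s) (A' s) * (0 : Matrix (Fin n ⊕ Fin n) (Fin n) ℝ) := by
      rw [fromCols_mul_fromRows, key s, Matrix.mul_zero]
    obtain ⟨u, hu⟩ := hAf s
    have huinv : (↑u⁻¹ : Matrix (Fin n ⊕ Fin n) (Fin n ⊕ Fin n) ℝ)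
        * fromCols (A s) (A' s) = 1 := by rw [← hu]; exact u.inv_mul
    have h1 : fromRows (X'' s - Q s * X s + X' s * P₁ s + X s * Q₁ s)
        ((2 : ℝ) • X' s - P s * X s + X s * P₁ s)
        = (0 : Matrix (Fin n ⊕ Fin n) (Fin n) ℝ) := by
      have h2 := congrArg (fun Z => (↑u⁻¹ : Matrix (Fin n ⊕ Fin n) (Fin n ⊕ Fin n) ℝ) * Z) h0
      simpa only [← Matrix.mul_assoc, huinv, Matrix.one_mul, Matrix.mul_zero] using h2
    constructor
    · ext i j
      have := congrFun (congrFun h1 (Sum.inr i)) j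
      simpa [Matrix.fromRows_apply_inr] using this
    · ext i j
      have := congrFun (congrFun h1 (Sum.inl i)) j
      simpa [Matrix.fromRows_apply_inl] using this
  have e1 : ∀ s, X s * P₁ s = P s * X s - (2 : ℝ) • X' s := by
    intro s
    have h := eq_neg_of_add_eq_zero_right (hMN s).1
    rw [h, neg_sub]
  have e2 : ∀ s, X s * Q₁ s = Q s * X s - X'' s - X' s * P₁ s := by
    intro s
    have h := eq_neg_of_add_eq_zero_right (hMN s).2
    rw [h]; abel
  -- derivative of X * P₁ computed two ways
  have hD1 : MDeriv (fun s => X s * P₁ s) (fun s => X' s * P₁ s + X s * P₁' s) :=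
    hX.mul' hP₁'
  have hD2 : MDeriv (fun s => X s * P₁ s)
      (fun s => (P' s * X s + P s * X' s) - (2 : ℝ) • X'' s) := by
    have hfun : (fun s => X s * P₁ s) = fun s => P s * X s - (2 : ℝ) • X' s :=
      funext e1
    rw [hfun]
    exact (hP'.mul' hX).sub' (MDeriv.smul' 2 hX')
  intro t
  have e3 : X' t * P₁ t + X t * P₁' t = (P' t * X t + P t * X' t) - (2 : ℝ) • X'' t := by
    ext i j
    exact (hD1 i j t).unique (hD2 i j t)
  have e3' : X t * P₁' t = P' t * X t + P t * X' t - (2 : ℝ) • X'' t - X' t * P₁ t := by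
    rw [← e3]; abel
  have hpp : X t * (P₁ t * P₁ t)
      = P t * P t * X t - (2 : ℝ) • (P t * X' t) - (2 : ℝ) • (X' t * P₁ t) := by
    calc X t * (P₁ t * P₁ t) = (X t * P₁ t) * P₁ t := by rw [Matrix.mul_assoc]
    _ = (P t * X t - (2 : ℝ) • X' t) * P₁ t := by rw [e1]
    _ = P t * (X t * P₁ t) - (2 : ℝ) • (X' t * P₁ t) := by
        rw [Matrix.sub_mul, Matrix.smul_mul, Matrix.mul_assoc]
    _ = P t * (P t * X t - (2 : ℝ) • X' t) - (2 : ℝ) • (X' t * P₁ t) := by rw [e1]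
    _ = _ := by rw [Matrix.mul_sub, Matrix.mul_smul, ← Matrix.mul_assoc]
  have main : X t * ((2 : ℝ) • Q₁ t - (2⁻¹ : ℝ) • (P₁ t * P₁ t) - P₁' t)
      = ((2 : ℝ) • Q t - (2⁻¹ : ℝ) • (P t * P t) - P' t) * X t := by
    rw [Matrix.mul_sub, Matrix.mul_sub, Matrix.mul_smul, Matrix.mul_smul, e2 t, hpp, e3']
    rw [Matrix.sub_mul, Matrix.sub_mul, Matrix.smul_mul, Matrix.smul_mul]
    module
  have hxinv : (X t)⁻¹ * X t = 1 :=
    Matrix.nonsing_inv_mul _ ((Matrix.isUnit_iff_isUnit_det _).mp (hXu t))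
  rw [Matrix.mul_assoc, ← main, ← Matrix.mul_assoc, hxinv, Matrix.one_mul]
end
end
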